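/- arXiv:2311.03119 — 2 statements merged into one kernel-verified Lean document; each statement's English description precedes it below -/
import Mathlib

section
/- Let B be a separable Banach space and μ a finite nonnegative Borel measure on B. Then there exist a separable Banach space B̂ and a linear isometric embedding ι: B → B̂ such that B̂ has the (ι_#μ)-MAP. -/
open MeasureTheory Filter Metric Set Topology ENNReal

noncomputable section

/-- The space `C([0,1]; X)` of continuous curves in a metric space `X`. -/
abbrev Curve (X : Type*) [MetricSpace X] := C(Set.Icc (0:ℝ) 1, X)

/-- Projection of `ℝ` onto `[0,1]`. -/
def proj01 (t : ℝ) : Set.Icc (0:ℝ) 1 := Set.projIcc 0 1 zero_le_one t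

variable {X : Type*} [MetricSpace X]

instance : MeasurableSpace (Curve X) := borel _
instance : BorelSpace (Curve X) := ⟨rfl⟩

/-- Evaluation at the right endpoint, `e₊(γ) = γ₁`. -/
def ePos (γ : Curve X) : X := γ ⟨1, by norm_num⟩

/-- Evaluation at the left endpoint, `e₋(γ) = γ₀`. -/
def eNeg (γ : Curve X) : X := γ ⟨0, by norm_num⟩

/-- A curve is Lipschitz if it admits some Lipschitz constant. -/
def IsLipCurve (γ : Curve X) : Prop := ∃ K : NNReal, LipschitzWith K γ

/-- `γ` has metric speed `v` at time `t`:
`v = lim_{h → 0} d(γ_{t+h}, γ_t)/|h|`. -/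
def HasSpeedAt (γ : Curve X) (t : ℝ) (v : ℝ) : Prop :=
  Tendsto (fun h : ℝ => dist (γ (proj01 (t + h))) (γ (proj01 t)) / |h|) (nhdsWithin 0 {0}ᶜ) (nhds v)

open Classical in
/-- The metric speed `|γ̇_t|` of a curve (junk value `0` where the defining limit does not exist). -/
def speed (γ : Curve X) (t : ℝ) : ℝ := if h : ∃ v, HasSpeedAt γ t v then h.choose else 0

/-- The length `ℓ(γ) = ∫₀¹ |γ̇_t| dt` of a curve. -/
def curveLen (γ : Curve X) : ℝ := ∫ t in (0:ℝ)..1, speed γ t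

/-- A curve has constant speed if `|γ̇_t| = ℓ(γ)` for a.e. `t ∈ [0,1]`. -/
def HasConstSpeed (γ : Curve X) : Prop :=
  ∀ᵐ t ∂(volume.restrict (Set.Icc (0:ℝ) 1)), speed γ t = curveLen γ

/-- The curvilinear integral `∫₀¹ f(γ_t) |γ̇_t| dt`, as an extended real number. -/
def curveIntE (f : X → ℝ) (γ : Curve X) : ℝ≥0∞ :=
  ∫⁻ t in Set.Icc (0:ℝ) 1, ENNReal.ofReal (f (γ (proj01 t)) * speed γ t)

variable [MeasurableSpace X]

/-- `b ∈ L^q(μ)` is the barycenter of the plan `π`: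
`∫ f b dμ = ∫∫₀¹ f(γ_t)|γ̇_t| dt dπ(γ)` for all continuous nonnegative `f ∈ L^p(μ)`. -/
def IsBarycenter (μ : Measure X) (p : ℝ) (π : Measure (Curve X)) (b : X → ℝ) : Prop :=
  (∀ᵐ x ∂μ, 0 ≤ b x) ∧
  ∀ f : X → ℝ, Continuous f → MemLp f (ENNReal.ofReal p) μ → (∀ x, 0 ≤ f x) →
    ENNReal.ofReal (∫ x, f x * b x ∂μ) = ∫⁻ γ, curveIntE f γ ∂π

/-- `π ∈ B_q(X,μ)` : a finite plan concentrated on Lipschitz curves, with barycenter in `L^q(μ)`,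
whose endpoint marginals are absolutely continuous with respect to `μ` with density in `L^q(μ)`. -/
def IsPlanBq (μ : Measure X) (p : ℝ) (q : ℝ≥0∞) (π : Measure (Curve X)) : Prop :=
  IsFiniteMeasure π ∧
  π {γ | ¬ IsLipCurve γ} = 0 ∧
  (∃ b : X → ℝ, MemLp b q μ ∧ IsBarycenter μ p π b) ∧
  (π.map ePos ≪ μ ∧ MemLp (fun x => ((π.map ePos).rnDeriv μ x).toReal) q μ) ∧
  (π.map eNeg ≪ μ ∧ MemLp (fun x => ((π.map eNeg).rnDeriv μ x).toReal) q μ)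

/-- `∫ f d∂π = ∫ f d(e₊)_#π − ∫ f d(e₋)_#π`. -/
def planBoundaryInt (π : Measure (Curve X)) (f : X → ℝ) : ℝ :=
  (∫ γ, f (ePos γ) ∂π) - ∫ γ, f (eNeg γ) ∂π

/-- `G` is a `p`-weak upper gradient of `f` in the sense of plans with barycenter:
`G ≥ 0`, `G ∈ L^p(μ)` and `∫ f d∂π ≤ ∫ G Bar(π) dμ` for every `π ∈ B_q(X,μ)`. -/
def IsWeakUpperGradient (μ : Measure X) (p : ℝ) (q : ℝ≥0∞) (f G : X → ℝ) : Prop :=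
  (∀ᵐ x ∂μ, 0 ≤ G x) ∧ MemLp G (ENNReal.ofReal p) μ ∧
  ∀ π : Measure (Curve X), IsPlanBq μ p q π → ∀ b : X → ℝ,
    MemLp b q μ → IsBarycenter μ p π b →
    planBoundaryInt π f ≤ ∫ x, G x * b x ∂μ

/-- Membership in the Sobolev space `W^{1,p}(X,μ)` defined via plans with barycenter. -/
def MemW1p (μ : Measure X) (p : ℝ) (q : ℝ≥0∞) (f : X → ℝ) : Prop :=
  MemLp f (ENNReal.ofReal p) μ ∧ ∃ G : X → ℝ, IsWeakUpperGradient μ p q f G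

/-- `G` is the minimal `p`-weak upper gradient `|Df|_{p,w}` of `f`. -/
def IsMinWeakUpperGradient (μ : Measure X) (p : ℝ) (q : ℝ≥0∞) (f G : X → ℝ) : Prop :=
  IsWeakUpperGradient μ p q f G ∧
  ∀ G' : X → ℝ, IsWeakUpperGradient μ p q f G' → ∀ᵐ x ∂μ, G x ≤ G' x

/-- The (smallest) Lipschitz constant of `f` restricted to `s`. -/
def lipConstOn (f : X → ℝ) (s : Set X) : ℝ :=
  sInf {K : ℝ | 0 ≤ K ∧ ∀ x ∈ s, ∀ y ∈ s, |f x - f y| ≤ K * dist x y}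

/-- The asymptotic slope `lip_a(f)(x) = inf_{r>0} Lip(f; B_r(x))`. -/
def asympSlope (f : X → ℝ) (x : X) : ℝ :=
  sInf {L : ℝ | ∃ r : ℝ, 0 < r ∧ L = lipConstOn f (Metric.ball x r)}

/-- `(1/p) ∫ g^p dμ` as an extended real number. -/
def pEnergy (μ : Measure X) (p : ℝ) (g : X → ℝ) : ℝ≥0∞ :=
  ENNReal.ofReal (1/p) * ∫⁻ x, ENNReal.ofReal (g x ^ p) ∂μ

/-- Weak convergence `f_n ⇀ f` in `L^p(μ)`: testing against every `g ∈ L^q(μ)`. -/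
def WeakLpTendsto (μ : Measure X) (p : ℝ) (F : ℕ → X → ℝ) (f : X → ℝ) : Prop :=
  ∀ g : X → ℝ, MemLp g (ENNReal.ofReal (p/(p-1))) μ →
    Tendsto (fun n => ∫ x, F n x * g x ∂μ) atTop (nhds (∫ x, f x * g x ∂μ))

/-- The Cheeger `p`-energy, obtained by relaxation of `(1/p)∫ lip_a(·)^p dμ`
over Lipschitz functions in `L^p(μ)`. -/
def cheegerEnergy (μ : Measure X) (p : ℝ) (f : X → ℝ) : ℝ≥0∞ :=
  sInf {E : ℝ≥0∞ | ∃ F : ℕ → X → ℝ,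
    (∀ n, (∃ K : NNReal, LipschitzWith K (F n)) ∧ MemLp (F n) (ENNReal.ofReal p) μ) ∧
    WeakLpTendsto μ p F f ∧
    E = atTop.liminf fun n => pEnergy μ p (asympSlope (F n))}

/-- Membership in the Sobolev space `H^{1,p}(X,μ)` defined via relaxation. -/
def MemH1p (μ : Measure X) (p : ℝ) (f : X → ℝ) : Prop :=
  MemLp f (ENNReal.ofReal p) μ ∧ cheegerEnergy μ p f ≠ ⊤

/-- `g` is the minimal `p`-relaxed slope `|Df|_p` of `f`:
the nonnegative function in `L^p(μ)` with `Ch_p(f) = (1/p)∫ g^p dμ`. -/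
def IsMinRelaxedSlope (μ : Measure X) (p : ℝ) (f g : X → ℝ) : Prop :=
  (∀ᵐ x ∂μ, 0 ≤ g x) ∧ MemLp g (ENNReal.ofReal p) μ ∧
    cheegerEnergy μ p f = pEnergy μ p g

end

noncomputable section

variable {B : Type*} [NormedAddCommGroup B] [NormedSpace ℝ B]

/-- `f : B → ℝ` is a cylindrical function: `f = g ∘ P` with `P : B → V` a bounded linear map
into a finite-dimensional space and `g` smooth with compact support. -/
def IsCylindrical (f : B → ℝ) : Prop :=
  ∃ (n : ℕ) (g : EuclideanSpace ℝ (Fin n) → ℝ) (P : B →L[ℝ] EuclideanSpace ℝ (Fin n)),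
    ContDiff ℝ (⊤ : ℕ∞) g ∧ HasCompactSupport g ∧ f = g ∘ P

/-- `B` has the `μ`-metric approximation property: there are finite-rank linear 1-Lipschitz
maps `P_n : B → B` with `P_n x → x` for `μ`-a.e. `x`. -/
def HasMuMAP [MeasurableSpace B] (μ : Measure B) : Prop :=
  ∃ P : ℕ → (B →L[ℝ] B),
    (∀ n, FiniteDimensional ℝ (LinearMap.range ((P n) : B →ₗ[ℝ] B)) ∧ LipschitzWith 1 (P n)) ∧
    ∀ᵐ x ∂μ, Tendsto (fun n => P n x) atTop (nhds x)

variable [MeasurableSpace B]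

/-- The cylindrical Cheeger `p`-energy, obtained by relaxation of
`(1/p)∫ ‖d f‖_{B*}^p dμ` over cylindrical functions. -/
def cylEnergy (μ : Measure B) (p : ℝ) (f : B → ℝ) : ℝ≥0∞ :=
  sInf {E : ℝ≥0∞ | ∃ F : ℕ → B → ℝ, (∀ n, IsCylindrical (F n)) ∧ WeakLpTendsto μ p F f ∧
    E = atTop.liminf fun n => pEnergy μ p fun x => ‖fderiv ℝ (F n) x‖}

/-- Membership in the Sobolev space `H^{1,p}_{cyl}(B,μ)` defined via relaxation of
cylindrical functions. -/
def MemH1pCyl (μ : Measure B) (p : ℝ) (f : B → ℝ) : Prop :=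
  MemLp f (ENNReal.ofReal p) μ ∧ cylEnergy μ p f ≠ ⊤

/-- `g` is the minimal cylindrical relaxed slope `|Df|_{p,cyl}` of `f`:
nonnegative, in `L^p(μ)`, and `Ch_{p,cyl}(f) = (1/p)∫ g^p dμ`. -/
def IsMinCylSlope (μ : Measure B) (p : ℝ) (f g : B → ℝ) : Prop :=
  (∀ᵐ x ∂μ, 0 ≤ g x) ∧ MemLp g (ENNReal.ofReal p) μ ∧ cylEnergy μ p f = pEnergy μ p g

/-- The conjugate exponent `q = p/(p-1) ∈ (1,∞]` of `p ∈ [1,∞)`. -/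
def conjExp (p : ℝ) : ℝ≥0∞ := if p = 1 then ⊤ else ENNReal.ofReal (p/(p-1))

/-- `L ∈ D(d*)` with `d*L = g`: here `L ∈ L^p(μ;B*)*` and `g ∈ L^q(μ)` satisfies
`L(df) = ∫ f g dμ` for every cylindrical function `f`. -/
def InAdjointDomain (μ : Measure B) (p : ℝ) [Fact (1 ≤ ENNReal.ofReal p)]
    (L : (Lp (B →L[ℝ] ℝ) (ENNReal.ofReal p) μ) →L[ℝ] ℝ) (g : B → ℝ) : Prop :=
  MemLp g (conjExp p) μ ∧
  ∀ f : B → ℝ, IsCylindrical f →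
    ∀ hf : MemLp (fun x => fderiv ℝ f x) (ENNReal.ofReal p) μ,
      L (hf.toLp _) = ∫ x, f x * g x ∂μ

end

/-- A separable Banach space, equipped with its Borel σ-algebra. -/
structure SepBanach : Type 1 where
  carrier : Type
  grp : NormedAddCommGroup carrier
  mod : NormedSpace ℝ carrier
  cpl : CompleteSpace carrier
  sep : TopologicalSpace.SeparableSpace carrier
  mble : MeasurableSpace carrier
  brl : BorelSpace carrier

attribute [instance] SepBanach.grp SepBanach.mod SepBanach.cpl SepBanach.sep
  SepBanach.mble SepBanach.brl


theorem cmap_partition_step (K : Type) [MetricSpace K] [CompactSpace K] [Nonempty K]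
    {δ : ℝ} (hδ : 0 < δ) :
    ∃ P : C(K, ℝ) →L[ℝ] C(K, ℝ),
      FiniteDimensional ℝ (LinearMap.range (P : C(K, ℝ) →ₗ[ℝ] C(K, ℝ))) ∧
      LipschitzWith 1 P ∧
      ∀ (g : C(K, ℝ)) (ε : ℝ), 0 ≤ ε →
        (∀ a b : K, dist a b < δ → dist (g a) (g b) ≤ ε) → dist (P g) g ≤ ε := by
  obtain ⟨s, hscov⟩ := isCompact_univ.elim_finite_subcover (fun t : K => ball t δ)
    (fun t => isOpen_ball) (fun x _ => mem_iUnion.2 ⟨x, mem_ball_self hδ⟩)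
  have hs : ∀ x : K, ∃ t ∈ s, dist x t < δ := by
    intro x
    rcases mem_iUnion₂.1 (hscov (mem_univ x)) with ⟨t, ht, hxt⟩
    exact ⟨t, ht, mem_ball.1 hxt⟩
  set ψ : K → K → ℝ := fun t x => max (δ - dist x t) 0 with hψdef
  have hψc : ∀ t, Continuous (ψ t) := fun t =>
    (continuous_const.sub (continuous_id.dist continuous_const)).max continuous_const
  have hψ0 : ∀ t x, 0 ≤ ψ t x := fun t x => le_max_right _ _
  set T : K → ℝ := fun x => ∑ t ∈ s, ψ t x with hTdef
  have hT : ∀ x, 0 < T x := by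
    intro x
    rcases hs x with ⟨t, ht, hlt⟩
    exact Finset.sum_pos' (fun i _ => hψ0 i x)
      ⟨t, ht, lt_max_iff.2 (Or.inl (by linarith))⟩
  have hTc : Continuous T := continuous_finset_sum _ fun t _ => hψc t
  set Φ : K → C(K, ℝ) := fun t => ⟨fun x => ψ t x / T x,
    (hψc t).div hTc fun x => (hT x).ne'⟩ with hΦdef
  have hΦ0 : ∀ t x, 0 ≤ Φ t x := fun t x => div_nonneg (hψ0 t x) (hT x).le
  have hΦsum : ∀ x, ∑ t ∈ s, Φ t x = 1 := by
    intro x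
    show (∑ t ∈ s, ψ t x / T x) = 1
    rw [← Finset.sum_div]
    exact div_self (hT x).ne'
  have hsupp : ∀ t x, Φ t x ≠ 0 → dist x t < δ := by
    intro t x h
    by_contra hge
    apply h
    show ψ t x / T x = 0
    have : ψ t x = 0 := max_eq_right (by push_neg at hge; linarith)
    rw [this, zero_div]
  set Plin : C(K, ℝ) →ₗ[ℝ] C(K, ℝ) :=
    { toFun := fun f => ∑ t ∈ s, f t • Φ t
      map_add' := fun f g => by
        simp only [ContinuousMap.add_apply, add_smul]
        exact Finset.sum_add_distrib
      map_smul' := fun c f => by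
        simp only [ContinuousMap.smul_apply, smul_eq_mul, RingHom.id_apply, Finset.smul_sum,
          smul_smul] } with hPlindef
  have heval : ∀ (f : C(K, ℝ)) (x : K), (Plin f) x = ∑ t ∈ s, f t * Φ t x := by
    intro f x
    show (∑ t ∈ s, f t • Φ t) x = _
    rw [ContinuousMap.sum_apply]
    simp [smul_eq_mul]
  have hbound : ∀ f : C(K, ℝ), ‖Plin f‖ ≤ ‖f‖ := by
    intro f
    refine (ContinuousMap.norm_le _ (norm_nonneg f)).2 fun x => ?_
    rw [heval, Real.norm_eq_abs]
    calc |∑ t ∈ s, f t * Φ t x| ≤ ∑ t ∈ s, |f t * Φ t x| :=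
          Finset.abs_sum_le_sum_abs _ _
      _ ≤ ∑ t ∈ s, ‖f‖ * Φ t x := by
          refine Finset.sum_le_sum fun t _ => ?_
          rw [abs_mul, abs_of_nonneg (hΦ0 t x)]
          exact mul_le_mul_of_nonneg_right (f.norm_coe_le_norm t) (hΦ0 t x)
      _ = ‖f‖ := by rw [← Finset.mul_sum, hΦsum, mul_one]
  have hb1 : ∀ f : C(K, ℝ), ‖Plin f‖ ≤ 1 * ‖f‖ := fun f => by simpa using hbound f
  set P : C(K, ℝ) →L[ℝ] C(K, ℝ) := Plin.mkContinuous 1 hb1 with hPdef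
  refine ⟨P, ?_, ?_, ?_⟩
  · have hle : LinearMap.range (P : C(K, ℝ) →ₗ[ℝ] C(K, ℝ)) ≤
        Submodule.span ℝ (Φ '' (s : Set K)) := by
      rintro y ⟨f, rfl⟩
      show Plin f ∈ _
      exact Submodule.sum_mem _ fun t ht =>
        Submodule.smul_mem _ _ (Submodule.subset_span ⟨t, ht, rfl⟩)
    have : FiniteDimensional ℝ (Submodule.span ℝ (Φ '' (s : Set K))) :=
      FiniteDimensional.span_of_finite ℝ ((s : Set K).toFinite.image Φ)
    exact Submodule.finiteDimensional_of_le hle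
  · refine LipschitzWith.of_dist_le_mul fun f g => ?_
    rw [dist_eq_norm, dist_eq_norm, ← map_sub]
    simpa using (show ‖P (f - g)‖ ≤ ‖f - g‖ from hbound (f - g))
  · intro g ε hε hmod
    refine (ContinuousMap.dist_le hε).2 fun x => ?_
    have hPg : P g x = ∑ t ∈ s, g t * Φ t x := heval g x
    rw [Real.dist_eq, hPg]
    have hkey : ∑ t ∈ s, (g t - g x) * Φ t x = (∑ t ∈ s, g t * Φ t x) - g x := by
      simp only [sub_mul]
      rw [Finset.sum_sub_distrib, ← Finset.mul_sum, hΦsum, mul_one]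
    calc |(∑ t ∈ s, g t * Φ t x) - g x| = |∑ t ∈ s, (g t - g x) * Φ t x| := by
          rw [hkey]
      _ ≤ ∑ t ∈ s, |(g t - g x) * Φ t x| := Finset.abs_sum_le_sum_abs _ _
      _ ≤ ∑ t ∈ s, ε * Φ t x := by
          refine Finset.sum_le_sum fun t _ => ?_
          rcases eq_or_ne (Φ t x) 0 with h | h
          · simp [h]
          · rw [abs_mul, abs_of_nonneg (hΦ0 t x)]
            refine mul_le_mul_of_nonneg_right ?_ (hΦ0 t x)
            have := hmod t x (by rw [dist_comm]; exact hsupp t x h)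
            rwa [Real.dist_eq] at this
      _ = ε := by rw [← Finset.mul_sum, hΦsum, mul_one]

theorem cmap_MAP (K : Type) [TopologicalSpace K] [CompactSpace K] [T2Space K]
    [SecondCountableTopology K] [Nonempty K] :
    ∃ P : ℕ → (C(K, ℝ) →L[ℝ] C(K, ℝ)),
      (∀ n, FiniteDimensional ℝ (LinearMap.range ((P n) : C(K, ℝ) →ₗ[ℝ] C(K, ℝ))) ∧
        LipschitzWith 1 (P n)) ∧
      ∀ g : C(K, ℝ), Tendsto (fun n => P n g) atTop (nhds g) := by
  letI : MetricSpace K := TopologicalSpace.metrizableSpaceMetric K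
  have H : ∀ n : ℕ, ∃ P : C(K, ℝ) →L[ℝ] C(K, ℝ),
      FiniteDimensional ℝ (LinearMap.range (P : C(K, ℝ) →ₗ[ℝ] C(K, ℝ))) ∧
      LipschitzWith 1 P ∧
      ∀ (g : C(K, ℝ)) (ε : ℝ), 0 ≤ ε →
        (∀ a b : K, dist a b < 1 / (n + 1) → dist (g a) (g b) ≤ ε) → dist (P g) g ≤ ε :=
    fun n => cmap_partition_step K (by positivity)
  choose P hFD hLip happ using H
  refine ⟨P, fun n => ⟨hFD n, hLip n⟩, fun g => ?_⟩
  rw [Metric.tendsto_atTop]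
  intro ε hε
  have hu : UniformContinuous ⇑g :=
    CompactSpace.uniformContinuous_of_continuous (map_continuous g)
  obtain ⟨δ₀, hδ₀, hδ⟩ := Metric.uniformContinuous_iff.1 hu (ε / 2) (half_pos hε)
  obtain ⟨N, hN⟩ := exists_nat_one_div_lt hδ₀
  refine ⟨N, fun n hn => ?_⟩
  have h1 : (1 : ℝ) / (n + 1) ≤ 1 / (N + 1) := by
    apply one_div_le_one_div_of_le (by positivity)
    exact_mod_cast Nat.succ_le_succ hn
  have := happ n g (ε / 2) (half_pos hε).le fun a b hab =>
    (hδ (lt_of_lt_of_le hab (h1.trans hN.le))).le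
  calc dist (P n g) g ≤ ε / 2 := this
    _ < ε := half_lt_self hε

/-- **Embedding into a space with the `μ`-metric approximation property.**
Every separable Banach space `B` with a finite Borel measure `μ` admits a linear isometric
embedding `ι : B → B̂` into a separable Banach space `B̂` having the `(ι_#μ)`-MAP. -/
theorem exists_embedding_with_muMAP {B : Type*} [NormedAddCommGroup B] [NormedSpace ℝ B]
    [CompleteSpace B] [TopologicalSpace.SeparableSpace B] [MeasurableSpace B] [BorelSpace B]
    (μ : Measure B) [IsFiniteMeasure μ] :
    ∃ (W : SepBanach) (ι : B →ₗᵢ[ℝ] W.carrier), HasMuMAP (μ.map ι) := by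
  haveI : Nonempty B := ⟨0⟩
  set u : ℕ → B := TopologicalSpace.denseSeq B with hu
  have hud : DenseRange u := TopologicalSpace.denseRange_denseSeq B
  set S : Set (WeakDual ℝ B) := WeakDual.toStrongDual ⁻¹' Metric.closedBall 0 1 with hS
  have hScpt : IsCompact S := WeakDual.isCompact_closedBall (𝕜 := ℝ) (E := B) 0 1
  haveI : CompactSpace S := isCompact_iff_compactSpace.mp hScpt
  have h0S : (0 : WeakDual ℝ B) ∈ S := by
    simp [hS, Metric.mem_closedBall]
  set Ψ : S → (ℕ → ℝ) := fun f j => (f : WeakDual ℝ B) (u j) with hΨ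
  have hΨc : Continuous Ψ :=
    continuous_pi fun j => (WeakDual.eval_continuous (u j)).comp continuous_subtype_val
  have hΨi : Function.Injective Ψ := by
    intro f g h
    exact Subtype.ext (DFunLike.coe_injective (Continuous.ext_on hud (map_continuous _)
      (map_continuous _) (by rintro _ ⟨j, rfl⟩; exact congrFun h j)))
  have hΨemb := hΨc.isClosedEmbedding hΨi
  set K₀ : Set (ℕ → ℝ) := Set.range Ψ with hK₀
  haveI : CompactSpace K₀ := isCompact_iff_compactSpace.mp (isCompact_range hΨc)
  haveI : Nonempty K₀ := ⟨⟨Ψ ⟨0, h0S⟩, Set.mem_range_self _⟩⟩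
  set e : S ≃ₜ K₀ := hΨemb.toIsEmbedding.toHomeomorph with he
  set ιfun : B → C(K₀, ℝ) := fun x =>
    ⟨fun t => ((e.symm t : S) : WeakDual ℝ B) x,
      (WeakDual.eval_continuous x).comp (continuous_subtype_val.comp e.symm.continuous)⟩
    with hιfun
  have hle : ∀ x : B, ‖ιfun x‖ ≤ ‖x‖ := by
    intro x
    refine (ContinuousMap.norm_le _ (norm_nonneg x)).2 fun t => ?_
    have hf : ‖WeakDual.toStrongDual ((e.symm t : S) : WeakDual ℝ B)‖ ≤ 1 := by
      have h2 : ((e.symm t : S) : WeakDual ℝ B) ∈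
          WeakDual.toStrongDual ⁻¹' Metric.closedBall 0 1 := (e.symm t : S).2
      rw [Set.mem_preimage, Metric.mem_closedBall, dist_zero_right] at h2
      exact h2
    calc ‖((e.symm t : S) : WeakDual ℝ B) x‖
        ≤ ‖WeakDual.toStrongDual ((e.symm t : S) : WeakDual ℝ B)‖ * ‖x‖ :=
          ContinuousLinearMap.le_opNorm _ x
      _ ≤ 1 * ‖x‖ := mul_le_mul_of_nonneg_right hf (norm_nonneg x)
      _ = ‖x‖ := one_mul _
  have hnorm : ∀ x : B, ‖ιfun x‖ = ‖x‖ := by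
    intro x
    refine le_antisymm (hle x) ?_
    rcases eq_or_ne x 0 with rfl | hx
    · simpa using norm_nonneg (ιfun 0)
    obtain ⟨g, hg1, hgx⟩ := exists_dual_vector ℝ x (norm_ne_zero_iff.mpr hx)
    have hgS : (StrongDual.toWeakDual g) ∈ S := by
      show WeakDual.toStrongDual (StrongDual.toWeakDual g) ∈ Metric.closedBall 0 1
      rw [Metric.mem_closedBall, dist_zero_right]
      exact le_of_eq (by rw [show WeakDual.toStrongDual (StrongDual.toWeakDual g) = g
        from rfl, hg1])
    set t₀ : K₀ := e ⟨StrongDual.toWeakDual g, hgS⟩ with ht₀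
    have hval : (ιfun x) t₀ = g x := by
      show ((e.symm (e ⟨StrongDual.toWeakDual g, hgS⟩) : S) : WeakDual ℝ B) x = g x
      rw [Homeomorph.symm_apply_apply]
      rfl
    have : ‖x‖ = ‖(ιfun x) t₀‖ := by
      rw [hval, hgx]
      simp [Real.norm_eq_abs, abs_of_nonneg (norm_nonneg x)]
    rw [this]
    exact (ιfun x).norm_coe_le_norm t₀
  set ι : B →ₗᵢ[ℝ] C(K₀, ℝ) :=
    { toLinearMap :=
        { toFun := ιfun
          map_add' := fun x y => ContinuousMap.ext fun t => by
            show ((e.symm t : S) : WeakDual ℝ B) (x + y) =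
              ((e.symm t : S) : WeakDual ℝ B) x + ((e.symm t : S) : WeakDual ℝ B) y
            exact map_add _ x y
          map_smul' := fun c x => ContinuousMap.ext fun t => by
            show ((e.symm t : S) : WeakDual ℝ B) (c • x) =
              c • ((e.symm t : S) : WeakDual ℝ B) x
            exact map_smul _ c x }
      norm_map' := hnorm } with hι
  letI : MeasurableSpace C(K₀, ℝ) := borel _
  haveI : BorelSpace C(K₀, ℝ) := ⟨rfl⟩
  refine ⟨⟨C(K₀, ℝ), inferInstance, inferInstance, inferInstance, inferInstance,
    inferInstance, inferInstance⟩, ι, ?_⟩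
  obtain ⟨P, hP, hconv⟩ := cmap_MAP K₀
  exact ⟨P, hP, ae_of_all _ fun g => hconv g⟩
end

section
/- Let (X,d) be a complete separable metric space, f: X → ℝ a Lipschitz function, and γ: [0,1] → X a Lipschitz curve. Then |f(γ_1) − f(γ_0)| ≤ ∫₀¹ lip_a(f)(γ_t) |γ̇_t| dt. -/
open MeasureTheory Filter Metric Set Topology ENNReal

/-! Since `f ∘ γ` is Lipschitz, hence absolutely continuous,
`|f(γ₁) - f(γ₀)| ≤ ∫₀¹ |(f ∘ γ)'|`, and it suffices to show
`|(f ∘ γ)'(t)| ≤ lip_a(f)(γ_t) |γ̇_t|` for a.e. `t`. Wherever both derivatives exist this holds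
because `γ_{t+h}` eventually stays in each ball `B_r(γ_t)`, where the difference quotients of
`f ∘ γ` are at most `Lip(f; B_r(γ_t))` times those of `γ`.

The metric speed exists a.e. (Ambrosio–Tilli): for a dense sequence `(u_n)` in the range of `γ`
put `m = supₙ |d/dt d(γ_t, u_n)|`. Then `d(γ_s, γ_t) ≤ |∫ₛᵗ m|`, so at Lebesgue points of `m`
the metric difference quotients have `limsup ≤ m(t)`, while each `|d/dt d(γ_t, u_n)|` bounds
their `liminf` from below. -/

open scoped NNReal

theorem AbsolutelyContinuousOnInterval.enorm_sub_le_lintegral_deriv {φ : ℝ → ℝ} {a b : ℝ}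
    (hφ : AbsolutelyContinuousOnInterval φ a b) (hab : a ≤ b) :
    ‖φ b - φ a‖ₑ ≤ ∫⁻ t in Icc a b, ‖deriv φ t‖ₑ := by
  rw [← hφ.integral_deriv_eq_sub, intervalIntegral.integral_of_le hab]
  exact (enorm_integral_le_lintegral_enorm _).trans (lintegral_mono_set Ioc_subset_Icc_self)

theorem tendsto_of_isLUB_of_le_of_le {α ι β : Type*} [LinearOrder β] [TopologicalSpace β]
    [OrderTopology β] {l : Filter α} {Q U : α → β} {L : ι → α → β} {ℓ : ι → β} {m : β}
    (hm : IsLUB (range ℓ) m) (hL : ∀ n, Tendsto (L n) l (𝓝 (ℓ n)))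
    (hLQ : ∀ n, ∀ᶠ x in l, L n x ≤ Q x) (hU : Tendsto U l (𝓝 m))
    (hQU : ∀ᶠ x in l, Q x ≤ U x) : Tendsto Q l (𝓝 m) := by
  refine tendsto_order.2 ⟨fun a ha => ?_, fun a ha => ?_⟩
  · obtain ⟨_, ⟨n, rfl⟩, han, -⟩ := hm.exists_between ha
    filter_upwards [(hL n).eventually_const_lt han, hLQ n] with x h₁ h₂ using h₁.trans_le h₂
  · filter_upwards [hU.eventually_lt_const ha, hQU] with x h₁ h₂ using h₂.trans_lt h₁

section MetricDerivative

variable {X : Type*} [PseudoMetricSpace X]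

def HasMetricDerivAt (c : ℝ → X) (v t : ℝ) : Prop :=
  Tendsto (fun h : ℝ => dist (c (t + h)) (c t) / |h|) (𝓝[≠] 0) (𝓝 v)

theorem HasDerivAt.hasMetricDerivAt_abs {F : ℝ → ℝ} {v t : ℝ} (hF : HasDerivAt F v t) :
    HasMetricDerivAt F |v| t := by
  refine (hasDerivAt_iff_tendsto_slope_zero.1 hF).abs.congr fun h => ?_
  rw [smul_eq_mul, abs_mul, abs_inv, Real.dist_eq, inv_mul_eq_div]

theorem dist_le_of_forall_abs_dist_sub_le {ι : Type*} {x y : X} {u : ι → X} {C : ℝ}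
    (hy : y ∈ closure (range u)) (h : ∀ n, |dist x (u n) - dist y (u n)| ≤ C) :
    dist x y ≤ C := by
  refine le_of_forall_pos_le_add fun ε hε => ?_
  obtain ⟨_, ⟨n, rfl⟩, hn⟩ := Metric.mem_closure_iff.1 hy (ε / 2) (half_pos hε)
  linarith [(abs_le.1 (h n)).2, dist_triangle x (u n) y, dist_comm y (u n)]

noncomputable def supAbsDerivDist (c : ℝ → X) (u : ℕ → X) (t : ℝ) : ℝ :=
  ⨆ n, |deriv (fun s => dist (c s) (u n)) t|

namespace LipschitzWith

variable {c : ℝ → X} {K : ℝ≥0}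

theorem dist_left_comp (hc : LipschitzWith K c) (y : X) :
    LipschitzWith K (fun s => dist (c s) y) := by
  simpa [Function.comp_def] using (LipschitzWith.dist_left y).comp hc

theorem bddAbove_range_abs_deriv_dist (hc : LipschitzWith K c) (u : ℕ → X) (t : ℝ) :
    BddAbove (range fun n => |deriv (fun s => dist (c s) (u n)) t|) :=
  ⟨K, forall_mem_range.2 fun n => norm_deriv_le_of_lipschitz (hc.dist_left_comp (u n))⟩

theorem supAbsDerivDist_nonneg (hc : LipschitzWith K c) (u : ℕ → X) (t : ℝ) :
    0 ≤ supAbsDerivDist c u t :=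
  (abs_nonneg _).trans (le_ciSup (hc.bddAbove_range_abs_deriv_dist u t) 0)

theorem supAbsDerivDist_le (hc : LipschitzWith K c) (u : ℕ → X) (t : ℝ) :
    supAbsDerivDist c u t ≤ K :=
  ciSup_le fun n => norm_deriv_le_of_lipschitz (hc.dist_left_comp (u n))

theorem locallyIntegrable_supAbsDerivDist (hc : LipschitzWith K c) (u : ℕ → X) :
    LocallyIntegrable (supAbsDerivDist c u) := by
  refine (memLp_top_of_bound ?_ K (ae_of_all _ fun t => ?_)).locallyIntegrable le_top
  · exact (Measurable.iSup fun n => (measurable_deriv _).abs).aestronglyMeasurable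
  · rw [Real.norm_of_nonneg (hc.supAbsDerivDist_nonneg u t)]
    exact hc.supAbsDerivDist_le u t

theorem dist_le_abs_integral_supAbsDerivDist (hc : LipschitzWith K c) {u : ℕ → X}
    (hu : range c ⊆ closure (range u)) (a b : ℝ) :
    dist (c b) (c a) ≤ |∫ s in a..b, supAbsDerivDist c u s| := by
  refine dist_le_of_forall_abs_dist_sub_le (hu (mem_range_self a)) fun n => ?_
  rw [← (hc.dist_left_comp (u n)).lipschitzOnWith.absolutelyContinuousOnInterval
    |>.integral_deriv_eq_sub]
  exact intervalIntegral.norm_integral_le_abs_of_norm_le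
    (f := deriv fun s => dist (c s) (u n)) (g := supAbsDerivDist c u)
    (ae_of_all _ fun s => le_ciSup (hc.bddAbove_range_abs_deriv_dist u s) n)
    ((hc.locallyIntegrable_supAbsDerivDist u).integrableOn_isCompact isCompact_uIcc
      |>.intervalIntegrable)

theorem ae_exists_hasMetricDerivAt (hc : LipschitzWith K c) :
    ∀ᵐ t, ∃ v, HasMetricDerivAt c v t := by
  obtain ⟨q, hq⟩ := TopologicalSpace.exists_dense_seq ℝ
  have hu : range c ⊆ closure (range (c ∘ q)) := by
    rw [range_comp]
    exact hc.continuous.range_subset_closure_image_dense hq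
  filter_upwards [LocallyIntegrable.ae_hasDerivAt_integral
      (hc.locallyIntegrable_supAbsDerivDist (c ∘ q)),
    ae_all_iff.2 fun n => (hc.dist_left_comp (c (q n))).ae_differentiableAt_of_real]
    with t hF hφ
  have hU := (hF t).hasMetricDerivAt_abs
  rw [abs_of_nonneg (hc.supAbsDerivDist_nonneg _ t)] at hU
  refine ⟨_, tendsto_of_isLUB_of_le_of_le (isLUB_ciSup (hc.bddAbove_range_abs_deriv_dist _ t))
    (fun n => (hφ n).hasDerivAt.hasMetricDerivAt_abs) (fun n => .of_forall fun h => ?_) hU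
    (.of_forall fun h => ?_)⟩
  · gcongr
    rw [Real.dist_eq]
    exact abs_dist_sub_le _ _ _
  · gcongr
    simpa [Real.dist_eq] using hc.dist_le_abs_integral_supAbsDerivDist hu t (t + h)

end LipschitzWith

end MetricDerivative

section AsymptoticSlope

variable {X : Type*} [MetricSpace X] {f : X → ℝ}

theorem LipschitzOnWith.abs_sub_le_lipConstOn_mul_dist {K : ℝ≥0} {s : Set X}
    (hf : LipschitzOnWith K f s) {x y : X} (hx : x ∈ s) (hy : y ∈ s) :
    |f x - f y| ≤ lipConstOn f s * dist x y := by
  rcases eq_or_ne x y with rfl | hxy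
  · simp
  have hd : 0 < dist x y := dist_pos.2 hxy
  rw [← div_le_iff₀ hd]
  refine le_csInf ⟨K, K.2, fun x hx y hy => ?_⟩ fun L hL => (div_le_iff₀ hd).2 (hL.2 x hx y hy)
  simpa [Real.dist_eq] using hf.dist_le_mul x hx y hy

theorem le_asympSlope_mul_of_forall_le {x : X} {a v : ℝ} (hv : 0 ≤ v)
    (h : ∀ r > 0, a ≤ lipConstOn f (ball x r) * v) : a ≤ asympSlope f x * v := by
  rcases hv.eq_or_lt with rfl | hv
  · simpa using h 1 one_pos
  rw [← div_le_iff₀ hv]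
  refine le_csInf ⟨_, 1, one_pos, rfl⟩ ?_
  rintro _ ⟨r, hr, rfl⟩
  exact (div_le_iff₀ hv).2 (h r hr)

theorem HasDerivAt.abs_le_asympSlope_mul {K : ℝ≥0} (hf : LipschitzWith K f) {c : ℝ → X}
    {t g' v : ℝ} (hc : ContinuousAt c t) (hg : HasDerivAt (fun s => f (c s)) g' t)
    (hv : HasMetricDerivAt c v t) : |g'| ≤ asympSlope f (c t) * v := by
  refine le_asympSlope_mul_of_forall_le (ge_of_tendsto hv (.of_forall fun h => by positivity))
    fun r hr => le_of_tendsto_of_tendsto hg.hasMetricDerivAt_abs (hv.const_mul _) ?_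
  have hc' : Tendsto (fun h => c (t + h)) (𝓝[≠] 0) (𝓝 (c t)) :=
    (hc.tendsto.comp ((continuous_const_add t).tendsto' 0 t (add_zero t))).mono_left
      nhdsWithin_le_nhds
  filter_upwards [hc' (ball_mem_nhds _ hr)] with h hh
  rw [mul_div_assoc']
  gcongr
  exact hf.lipschitzOnWith.abs_sub_le_lipConstOn_mul_dist hh (mem_ball_self hr)

end AsymptoticSlope

theorem speed_eq_of_hasMetricDerivAt {X : Type*} [MetricSpace X] {γ : Curve X} {t v : ℝ}
    (h : HasMetricDerivAt (fun s => γ (proj01 s)) v t) : speed γ t = v := by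
  have hex : ∃ v, HasSpeedAt γ t v := ⟨v, h⟩
  rw [speed, dif_pos hex]
  exact tendsto_nhds_unique hex.choose_spec h

theorem abs_sub_le_integral_asympSlope_general {X : Type*} [MetricSpace X]
    (f : X → ℝ) (hf : ∃ K : NNReal, LipschitzWith K f)
    (γ : Curve X) (hγ : IsLipCurve γ) :
    ENNReal.ofReal (|f (ePos γ) - f (eNeg γ)|) ≤
      ∫⁻ t in Set.Icc (0:ℝ) 1, ENNReal.ofReal (asympSlope f (γ (proj01 t)) * speed γ t) := by
  obtain ⟨Kf, hf⟩ := hf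
  obtain ⟨Kγ, hγ⟩ := hγ
  set c : ℝ → X := fun t => γ (proj01 t)
  have hc : LipschitzWith Kγ c := by
    simpa [c, proj01, Function.comp_def] using
      hγ.comp (LipschitzWith.projIcc (zero_le_one (α := ℝ)))
  have hg : LipschitzWith (Kf * Kγ) (fun t => f (c t)) := hf.comp hc
  have hderiv : ∀ᵐ t, ‖deriv (fun s => f (c s)) t‖ₑ ≤
      ENNReal.ofReal (asympSlope f (c t) * speed γ t) := by
    filter_upwards [hc.ae_exists_hasMetricDerivAt, hg.ae_differentiableAt_of_real]
      with t ⟨v, hv⟩ hgt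
    rw [Real.enorm_eq_ofReal_abs, speed_eq_of_hasMetricDerivAt hv]
    exact ENNReal.ofReal_le_ofReal
      (hgt.hasDerivAt.abs_le_asympSlope_mul hf hc.continuous.continuousAt hv)
  calc ENNReal.ofReal |f (ePos γ) - f (eNeg γ)| = ‖f (c 1) - f (c 0)‖ₑ := by
        simp [Real.enorm_eq_ofReal_abs, c, proj01, ePos, eNeg]
    _ ≤ ∫⁻ t in Icc 0 1, ‖deriv (fun s => f (c s)) t‖ₑ :=
        hg.lipschitzOnWith.absolutelyContinuousOnInterval.enorm_sub_le_lintegral_deriv zero_le_one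
    _ ≤ _ := lintegral_mono_ae (ae_restrict_of_ae hderiv)

/-- **Upper-gradient inequality for the asymptotic slope.**
If `f : X → ℝ` is Lipschitz and `γ : [0,1] → X` is a Lipschitz curve in a complete separable
metric space, then `|f(γ₁) − f(γ₀)| ≤ ∫₀¹ lip_a(f)(γ_t) |γ̇_t| dt`. -/
theorem abs_sub_le_integral_asympSlope {X : Type*} [MetricSpace X] [CompleteSpace X]
    [TopologicalSpace.SeparableSpace X]
    (f : X → ℝ) (hf : ∃ K : NNReal, LipschitzWith K f)
    (γ : Curve X) (hγ : IsLipCurve γ) :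
    ENNReal.ofReal (|f (ePos γ) - f (eNeg γ)|) ≤
      ∫⁻ t in Set.Icc (0:ℝ) 1, ENNReal.ofReal (asympSlope f (γ (proj01 t)) * speed γ t) :=
  abs_sub_le_integral_asympSlope_general f hf γ hγ
end
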